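/- arXiv:1502.07262 — 5 statements merged into one kernel-verified Lean document; each statement's English description precedes it below -/
import Mathlib

section
/- Let A_1, …, A_m be real n×n matrices and let α_1, …, α_m be nonnegative real numbers with α_1 + … + α_m = 1. If the convex combination A_c = α_1 A_1 + … + α_m A_m is Hurwitz, then there exists ε > 0 such that every complex eigenvalue of the matrix M(ε) = exp(ε α_m A_m) · exp(ε α_{m-1} A_{m-1}) · … · exp(ε α_1 A_1) has modulus strictly less than 1. -/
open Filter Matrix

/-- A real square matrix is Hurwitz if every eigenvalue of its complexification
has strictly negative real part. -/
def Hurwitz {n : ℕ} (A : Matrix (Fin n) (Fin n) ℝ) : Prop :=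
  ∀ μ ∈ spectrum ℂ (A.map (algebraMap ℝ ℂ)), μ.re < 0

/-!
The one-period matrix `M(ε)` is a smooth curve through `1` whose derivative at `0` is the
average `A_c = ∑ α_j A_j`, so `M(ε) = 1 + ε B(ε)` with `B(ε) → A_c` as `ε → 0⁺`. The compact
spectrum of `A_c` lies in an open region `{ν | c ‖ν‖² < -2 Re ν}` for some `c > 0`; by upper
hemicontinuity of the spectrum so does that of `B(ε)` for small `ε`, and then
`‖1 + εν‖² = 1 + ε (2 Re ν + ε ‖ν‖²) < 1` as soon as `ε < c`.
-/

open NormedSpace Topology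

theorem Complex.norm_one_add_ofReal_mul_lt_one {z : ℂ} {t : ℝ} (ht : 0 < t)
    (h : t * ‖z‖ ^ 2 < -2 * z.re) : ‖1 + t * z‖ < 1 := by
  have hsq : ‖1 + t * z‖ ^ 2 = 1 + t * (2 * z.re + t * ‖z‖ ^ 2) := by
    simp only [Complex.sq_norm, Complex.normSq_apply, Complex.add_re, Complex.add_im,
      Complex.mul_re, Complex.mul_im, Complex.ofReal_re, Complex.ofReal_im, Complex.one_re,
      Complex.one_im]
    ring
  have : ‖1 + t * z‖ ^ 2 < 1 ^ 2 := by nlinarith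
  exact (pow_lt_pow_iff_left₀ (norm_nonneg _) zero_le_one two_ne_zero).mp this

theorem IsCompact.exists_pos_forall_mul_sq_norm_lt {K : Set ℂ} (hK : IsCompact K)
    (hneg : ∀ z ∈ K, z.re < 0) : ∃ c > (0 : ℝ), ∀ z ∈ K, c * ‖z‖ ^ 2 < -2 * z.re := by
  have hopen : IsOpen {p : ℝ × ℂ | p.1 * ‖p.2‖ ^ 2 < -2 * p.2.re} :=
    isOpen_lt (by fun_prop) (by fun_prop)
  have hsmall : ∀ᶠ c in 𝓝 (0 : ℝ), ∀ z ∈ K, c * ‖z‖ ^ 2 < -2 * z.re :=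
    hK.eventually_forall_of_forall_eventually fun z hz =>
      hopen.mem_nhds (show (0 : ℝ) * ‖z‖ ^ 2 < -2 * z.re by linarith [hneg z hz])
  obtain ⟨c, hc, hcpos⟩ :=
    ((hsmall.filter_mono (nhdsWithin_le_nhds (s := Set.Ioi 0))).and self_mem_nhdsWithin).exists
  exact ⟨c, hcpos, hc⟩

theorem spectrum.one_add_smul_eq_image {𝕜 A : Type*} [Field 𝕜] [Ring A] [Algebra 𝕜 A]
    {t : 𝕜} (ht : t ≠ 0) (b : A) :
    spectrum 𝕜 (1 + t • b) = (fun z => 1 + t * z) '' spectrum 𝕜 b := by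
  rw [← map_one (algebraMap 𝕜 A), ← spectrum.singleton_add_eq,
    show t • b = (Units.mk0 t ht) • b from rfl, spectrum.unit_smul_eq_smul,
    Set.singleton_add, ← Set.image_smul, Set.image_image]
  rfl

theorem hasDerivAt_list_prod_exp_smul {𝕂 𝔸 : Type*} [RCLike 𝕂] [NormedRing 𝔸]
    [NormedAlgebra 𝕂 𝔸] [CompleteSpace 𝔸] (L : List 𝔸) :
    HasDerivAt (fun t : 𝕂 => (L.map fun a => exp (t • a)).prod) L.sum 0 := by
  induction L with
  | nil => simpa using hasDerivAt_const (0 : 𝕂) (1 : 𝔸)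
  | cons a L ih =>
    have ha : HasDerivAt (fun t : 𝕂 => exp (t • a)) a 0 := by
      simpa using hasDerivAt_exp_smul_const (𝕂 := 𝕂) a 0
    simp only [List.map_cons, List.prod_cons, List.sum_cons]
    exact (ha.mul ih).congr_deriv (by simp)

theorem eventually_spectrum_subset_ball_of_hasDerivAt {A : Type*} [NormedRing A]
    [NormedAlgebra ℂ A] [CompleteSpace A]
    {N : ℝ → A} {D : A} (hN : HasDerivAt N D 0) (hN0 : N 0 = 1)
    (hD : ∀ z ∈ spectrum ℂ D, z.re < 0) :
    ∀ᶠ ε in 𝓝[>] 0, spectrum ℂ (N ε) ⊆ Metric.ball 0 1 := by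
  obtain ⟨c, hc, hDc⟩ := (spectrum.isCompact D).exists_pos_forall_mul_sq_norm_lt hD
  have hslope : Tendsto (slope N 0) (𝓝[>] 0) (𝓝 D) :=
    (hasDerivAt_iff_tendsto_slope.mp hN).mono_left (nhdsWithin_mono _ fun _ h => h.ne')
  have hU : IsOpen {z : ℂ | c * ‖z‖ ^ 2 < -2 * z.re} := isOpen_lt (by fun_prop) (by fun_prop)
  have hspec : ∀ᶠ ε in 𝓝[>] 0,
      spectrum ℂ (slope N 0 ε) ⊆ {z : ℂ | c * ‖z‖ ^ 2 < -2 * z.re} :=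
    hslope.eventually <| (upperHemicontinuous_spectrum ℂ A).forall_isOpen D _ hU hDc
  filter_upwards [hspec, Ioo_mem_nhdsGT hc] with ε hε hεc
  have hNε : N ε = 1 + (ε : ℂ) • slope N 0 ε := by
    have h := sub_smul_slope N 0 ε
    rw [sub_zero, vsub_eq_sub, hN0] at h
    rw [Complex.coe_smul, h]
    abel
  rw [hNε, spectrum.one_add_smul_eq_image (by exact_mod_cast hεc.1.ne')]
  rintro _ ⟨ν, hν, rfl⟩
  refine mem_ball_zero_iff.mpr (Complex.norm_one_add_ofReal_mul_lt_one hεc.1 ?_)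
  calc ε * ‖ν‖ ^ 2 ≤ c * ‖ν‖ ^ 2 := by gcongr; exact hεc.2.le
    _ < -2 * ν.re := hε hν

section

attribute [local instance] Matrix.linftyOpNormedRing Matrix.linftyOpNormedAlgebra

theorem Hurwitz.eventually_spectrum_list_prod_exp_subset_ball {n : ℕ}
    {L : List (Matrix (Fin n) (Fin n) ℝ)} (hL : Hurwitz L.sum) :
    ∀ᶠ ε in 𝓝[>] (0 : ℝ), spectrum ℂ
      (((L.map fun a => exp (ε • a)).prod).map (algebraMap ℝ ℂ)) ⊆ Metric.ball 0 1 := by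
  let φ : Matrix (Fin n) (Fin n) ℝ →L[ℝ] Matrix (Fin n) (Fin n) ℂ :=
    (Algebra.ofId ℝ ℂ).mapMatrix.toLinearMap.toContinuousLinearMap
  have hderiv := φ.hasFDerivAt.comp_hasDerivAt 0 (hasDerivAt_list_prod_exp_smul (𝕂 := ℝ) L)
  refine eventually_spectrum_subset_ball_of_hasDerivAt hderiv ?_ hL
  simp

end

theorem cyclic_switching_schur_stable_general {n m : ℕ}
    (A : Fin m → Matrix (Fin n) (Fin n) ℝ) (α : Fin m → ℝ)
    (hc : Hurwitz (∑ j, α j • A j)) :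
    ∃ ε > (0 : ℝ), ∀ μ ∈ spectrum ℂ
      ((((List.ofFn fun j : Fin m =>
          NormedSpace.exp ((ε * α j) • A j)).reverse).prod).map (algebraMap ℝ ℂ)),
      ‖μ‖ < 1 := by
  set L := (List.ofFn fun j => α j • A j).reverse
  have hL : Hurwitz L.sum := by rwa [List.sum_reverse, List.sum_ofFn]
  obtain ⟨ε, hε, hpos⟩ := (hL.eventually_spectrum_list_prod_exp_subset_ball.and
    self_mem_nhdsWithin).exists
  refine ⟨ε, hpos, fun μ hμ => mem_ball_zero_iff.mp (hε ?_)⟩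
  simpa [L, List.map_reverse, List.map_ofFn, Function.comp_def, mul_smul] using hμ

/-- Proposition 1, core: cycling through the generators `A j` for time fractions `α j`
over a short enough period `ε` yields a Schur-stable one-period transition matrix. -/
theorem cyclic_switching_schur_stable {n m : ℕ}
    (A : Fin m → Matrix (Fin n) (Fin n) ℝ) (α : Fin m → ℝ)
    (hα : ∀ j, 0 ≤ α j) (hsum : ∑ j, α j = 1)
    (hc : Hurwitz (∑ j, α j • A j)) :
    ∃ ε > (0 : ℝ), ∀ μ ∈ spectrum ℂ
      ((((List.ofFn fun j : Fin m =>
          NormedSpace.exp ((ε * α j) • A j)).reverse).prod).map (algebraMap ℝ ℂ)),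
      ‖μ‖ < 1 :=
  cyclic_switching_schur_stable_general A α hc
end

section
/- Let A_1, …, A_m be real symmetric negative semidefinite n×n matrices whose kernels intersect trivially: if A_j x = 0 for all j then x = 0. Then for any positive real numbers τ_1, …, τ_m, the matrix M = exp(τ_m A_m) · … · exp(τ_1 A_1) has Euclidean operator norm strictly less than 1. -/
/-! In an orthonormal eigenbasis of a symmetric `B` with eigenvalues `μⱼ ≤ 0`, `exp B`
multiplies the `j`-th coordinate by `exp μⱼ ≤ 1`. Hence `exp B` either fixes `x`, which happens
exactly when `B x = 0`, or strictly shrinks its norm. This dichotomy survives products, so a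
nonzero vector whose norm the product preserved would lie in every kernel; compactness of the
unit sphere turns the pointwise strict inequality into `‖M‖ < 1`. -/

open Matrix
open scoped Matrix.Norms.L2Operator RealInnerProductSpace

theorem ContinuousLinearMap.opNorm_lt_one_of_norm_apply_lt {E F : Type*}
    [NormedAddCommGroup E] [NormedSpace ℝ E] [FiniteDimensional ℝ E]
    [NormedAddCommGroup F] [NormedSpace ℝ F] (T : E →L[ℝ] F)
    (hT : ∀ x ≠ 0, ‖T x‖ < ‖x‖) : ‖T‖ < 1 := by
  cases subsingleton_or_nontrivial E with
  | inl _ => simp [Subsingleton.elim T 0]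
  | inr _ =>
    obtain ⟨x₀, hx₀, hmax⟩ := (isCompact_sphere (0 : E) 1).exists_isMaxOn
      (NormedSpace.sphere_nonempty.mpr zero_le_one) T.continuous.norm.continuousOn
    rw [mem_sphere_zero_iff_norm] at hx₀
    calc ‖T‖ ≤ ‖T x₀‖ := T.opNorm_le_of_unit_norm (norm_nonneg _)
          fun x hx => hmax (mem_sphere_zero_iff_norm.mpr hx)
      _ < 1 := hx₀ ▸ hT x₀ (norm_ne_zero_iff.mp (by simp [hx₀]))

theorem List.prod_apply_eq_self_or_norm_lt {E : Type*} [NormedAddCommGroup E]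
    [NormedSpace ℝ E] (l : List (E →L[ℝ] E))
    (hl : ∀ T ∈ l, ∀ x, T x = x ∨ ‖T x‖ < ‖x‖) (x : E) :
    (∀ T ∈ l, T x = x) ∨ ‖l.prod x‖ < ‖x‖ := by
  induction l with
  | nil => simp
  | cons T l ih =>
    have hT := hl T List.mem_cons_self
    rw [List.prod_cons, mul_apply_eq_comp, List.forall_mem_cons]
    rcases ih (fun S hS => hl S (List.mem_cons_of_mem T hS)) with hfix | hlt
    · have hprod : l.prod x = x :=
        Submonoid.list_prod_mem (s := MulAction.stabilizerSubmonoid (E →L[ℝ] E) x) hfix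
      rw [hprod]
      exact (hT x).imp (⟨·, hfix⟩) id
    · exact .inr ((hT _).elim (fun h => h ▸ hlt) (·.trans hlt))

theorem OrthonormalBasis.eq_iff_forall_inner_eq {ι E : Type*} [Fintype ι]
    [NormedAddCommGroup E] [InnerProductSpace ℝ E] (b : OrthonormalBasis ι ℝ E) {x y : E} :
    x = y ↔ ∀ i, ⟪b i, x⟫ = ⟪b i, y⟫ :=
  ⟨fun h _ => h ▸ rfl,
    fun h => InnerProductSpace.ext_inner_left_basis b.toBasis (by simpa using h)⟩

theorem Real.exp_mul_eq_self_iff {a c : ℝ} : Real.exp a * c = c ↔ a * c = 0 := by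
  rcases eq_or_ne c 0 with rfl | hc
  · simp
  · rw [mul_eq_right₀ hc, Real.exp_eq_one_iff, mul_eq_zero, or_iff_left hc]

theorem Real.exp_mul_eq_self_or_sq_lt {a : ℝ} (ha : a ≤ 0) (c : ℝ) :
    Real.exp a * c = c ∨ (Real.exp a * c) ^ 2 < c ^ 2 := by
  refine or_iff_not_imp_left.mpr fun hne => ?_
  obtain ⟨ha₀, hc⟩ : a ≠ 0 ∧ c ≠ 0 := by
    rwa [Real.exp_mul_eq_self_iff, mul_eq_zero, not_or] at hne
  have hexp : Real.exp a ^ 2 < 1 :=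
    pow_lt_one₀ (Real.exp_nonneg a) (Real.exp_lt_one_iff.mpr (ha.lt_of_ne ha₀)) two_ne_zero
  rw [mul_pow]
  exact mul_lt_of_lt_one_left (sq_pos_of_ne_zero hc) hexp

namespace Matrix.IsHermitian

variable {ι : Type*} [Fintype ι] [DecidableEq ι] {B : Matrix ι ι ℝ} (hB : B.IsHermitian)

theorem eigenvalues_nonpos_of_posSemidef_neg (hneg : (-B).PosSemidef) (j : ι) :
    hB.eigenvalues j ≤ 0 := by
  have := hneg.dotProduct_mulVec_nonneg (hB.eigenvectorBasis j)
  rw [hB.eigenvalues_eq]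
  simp only [neg_mulVec, dotProduct_neg, star_trivial, RCLike.re_to_real] at this ⊢
  linarith

theorem toEuclideanCLM_cfc_eigenvectorBasis (f : ℝ → ℝ) (j : ι) :
    toEuclideanCLM (𝕜 := ℝ) (cfc f B) (hB.eigenvectorBasis j) =
      f (hB.eigenvalues j) • hB.eigenvectorBasis j := by
  ext1
  rw [ofLp_toEuclideanCLM, hB.cfc_eq, IsHermitian.cfc, Unitary.conjStarAlgAut_apply,
    ← mulVec_mulVec, ← mulVec_mulVec, star_eigenvectorUnitary_mulVec]
  simp [mul_comm]

theorem inner_eigenvectorBasis_toEuclideanCLM_cfc (f : ℝ → ℝ) (x : EuclideanSpace ℝ ι)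
    (j : ι) :
    ⟪hB.eigenvectorBasis j, toEuclideanCLM (𝕜 := ℝ) (cfc f B) x⟫ =
      f (hB.eigenvalues j) * ⟪hB.eigenvectorBasis j, x⟫ := by
  have hsymm := isSymmetric_toEuclideanLin_iff.mpr (IsSelfAdjoint.cfc (f := f) (a := B))
  rw [← real_inner_smul_left, ← toEuclideanCLM_cfc_eigenvectorBasis hB]
  exact (hsymm _ _).symm

theorem inner_eigenvectorBasis_toEuclideanCLM (x : EuclideanSpace ℝ ι) (j : ι) :
    ⟪hB.eigenvectorBasis j, toEuclideanCLM (𝕜 := ℝ) B x⟫ =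
      hB.eigenvalues j * ⟪hB.eigenvectorBasis j, x⟫ := by
  simpa only [cfc_id' ℝ B hB.isSelfAdjoint] using
    hB.inner_eigenvectorBasis_toEuclideanCLM_cfc (fun t => t) x j

theorem inner_eigenvectorBasis_toEuclideanCLM_exp (x : EuclideanSpace ℝ ι) (j : ι) :
    ⟪hB.eigenvectorBasis j, toEuclideanCLM (𝕜 := ℝ) (NormedSpace.exp B) x⟫ =
      Real.exp (hB.eigenvalues j) * ⟪hB.eigenvectorBasis j, x⟫ := by
  rw [← CFC.real_exp_eq_normedSpace_exp hB.isSelfAdjoint]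
  exact hB.inner_eigenvectorBasis_toEuclideanCLM_cfc Real.exp x j

theorem toEuclideanCLM_exp_apply_eq_self_iff (hB : B.IsHermitian) (x : EuclideanSpace ℝ ι) :
    toEuclideanCLM (𝕜 := ℝ) (NormedSpace.exp B) x = x ↔ toEuclideanCLM (𝕜 := ℝ) B x = 0 := by
  simp only [hB.eigenvectorBasis.eq_iff_forall_inner_eq,
    inner_eigenvectorBasis_toEuclideanCLM_exp, inner_eigenvectorBasis_toEuclideanCLM,
    inner_zero_right, Real.exp_mul_eq_self_iff]

theorem toEuclideanCLM_exp_apply_eq_self_or_norm_lt (hμ : ∀ j, hB.eigenvalues j ≤ 0)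
    (x : EuclideanSpace ℝ ι) :
    toEuclideanCLM (𝕜 := ℝ) (NormedSpace.exp B) x = x ∨
      ‖toEuclideanCLM (𝕜 := ℝ) (NormedSpace.exp B) x‖ < ‖x‖ := by
  have hcoord j := Real.exp_mul_eq_self_or_sq_lt (hμ j) ⟪hB.eigenvectorBasis j, x⟫
  simp only [← hB.inner_eigenvectorBasis_toEuclideanCLM_exp] at hcoord
  rw [hB.eigenvectorBasis.eq_iff_forall_inner_eq]
  refine or_iff_not_imp_left.mpr fun hfix => ?_
  obtain ⟨j, hj⟩ := not_forall.mp hfix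
  refine lt_of_pow_lt_pow_left₀ 2 (norm_nonneg x) ?_
  rw [← hB.eigenvectorBasis.sum_sq_inner_right, ← hB.eigenvectorBasis.sum_sq_inner_right]
  exact Finset.sum_lt_sum (fun i _ => (hcoord i).elim (fun h => h ▸ le_rfl) le_of_lt)
    ⟨j, Finset.mem_univ j, (hcoord j).resolve_left hj⟩

end Matrix.IsHermitian

/-- If `A 1, …, A m` are real symmetric negative semidefinite matrices whose kernels
intersect trivially, then for any positive dwell times `τ j` the product
`exp(τ m • A m) ⋯ exp(τ 1 • A 1)` has Euclidean operator norm strictly less than one. -/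
theorem symmetric_generators_strict_contraction {n m : ℕ}
    (A : Fin m → Matrix (Fin n) (Fin n) ℝ)
    (hA : ∀ j, (-(A j)).PosSemidef)
    (hker : ∀ x : Fin n → ℝ, (∀ j, A j *ᵥ x = 0) → x = 0)
    (τ : Fin m → ℝ) (hτ : ∀ j, 0 < τ j) :
    ‖(((List.ofFn fun j : Fin m =>
        NormedSpace.exp (τ j • A j)).reverse).prod)‖ < 1 := by
  have hneg j : (-(τ j • A j)).PosSemidef := by
    simpa only [smul_neg] using (hA j).smul (hτ j).le
  have hH j : (τ j • A j).IsHermitian := by simpa using (hneg j).isHermitian.neg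
  rw [cstar_norm_def, map_list_prod, List.map_reverse, List.map_ofFn]
  refine ContinuousLinearMap.opNorm_lt_one_of_norm_apply_lt _ fun x hx => ?_
  refine (List.prod_apply_eq_self_or_norm_lt _ ?_ x).resolve_left fun hfix => hx ?_
  · intro T hT
    obtain ⟨j, rfl⟩ := List.mem_ofFn.mp (List.mem_reverse.mp hT)
    exact (hH j).toEuclideanCLM_exp_apply_eq_self_or_norm_lt
      ((hH j).eigenvalues_nonpos_of_posSemidef_neg (hneg j))
  · refine WithLp.ofLp_injective 2 (hker x.ofLp fun j => ?_)
    have hAx := ((hH j).toEuclideanCLM_exp_apply_eq_self_iff x).mp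
      (hfix _ (List.mem_reverse.mpr (List.mem_ofFn.mpr ⟨j, rfl⟩)))
    rw [← WithLp.ofLp_injective 2 |>.eq_iff, ofLp_toEuclideanCLM, smul_mulVec] at hAx
    exact (smul_eq_zero.mp hAx).resolve_left (hτ j).ne'
end

section
/- Let A_1, …, A_m be real symmetric negative semidefinite n×n matrices whose kernels intersect trivially: if A_j x = 0 for all j then x = 0. Then for any positive real numbers τ_1, …, τ_m and any x ∈ ℝ^n, the sequence M^k x tends to 0 as k → ∞, where M = exp(τ_m A_m) · … · exp(τ_1 A_1). -/
/-!
Each factor `exp (τ A)` is, on Euclidean space, a self-adjoint operator with eigenvalues in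
`(0, 1]`, hence a paracontraction: it strictly shrinks every vector it does not fix, and its
fixed vectors are exactly the kernel of `A`. A product of paracontractions is again one, and a
vector is fixed by the product only if it is fixed by every factor; with trivially intersecting
kernels the product therefore strictly shrinks every nonzero vector. By compactness of the unit
sphere its operator norm is then `< 1`, so its powers tend to `0`.
-/

open Filter Matrix
open NormedSpace (exp)

/-- Paracontractions in the sense of Nelson and Neumann. -/
def IsParacontracting {E : Type*} [NormedAddCommGroup E] (f : E → E) : Prop :=
  ∀ x, f x ≠ x → ‖f x‖ < ‖x‖

namespace IsParacontracting

variable {E : Type*} [NormedAddCommGroup E] {f g : E → E}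

theorem norm_apply_le (hf : IsParacontracting f) (x : E) : ‖f x‖ ≤ ‖x‖ := by
  by_cases hx : f x = x
  · rw [hx]
  · exact (hf x hx).le

theorem comp (hg : IsParacontracting g) (hf : IsParacontracting f) :
    IsParacontracting (g ∘ f) := by
  intro x hx
  by_cases hfx : f x = x
  · rw [Function.comp_apply, hfx] at hx ⊢
    exact hg x hx
  · exact (hg.norm_apply_le (f x)).trans_lt (hf x hfx)

theorem apply_eq_self_of_comp_apply_eq_self (hg : IsParacontracting g)
    (hf : IsParacontracting f) {x : E} (h : g (f x) = x) : f x = x := by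
  by_contra hfx
  exact (h ▸ hg.norm_apply_le (f x)).not_gt (hf x hfx)

variable {R : Type*} [Semiring R] [Module R E] {l : List (E →L[R] E)}

theorem list_prod (hl : ∀ T ∈ l, IsParacontracting T) : IsParacontracting l.prod := by
  induction l with
  | nil => exact fun x hx => absurd rfl hx
  | cons T l ih =>
    rw [List.prod_cons]
    exact (hl T List.mem_cons_self).comp (ih fun S hS => hl S (List.mem_cons_of_mem _ hS))

theorem apply_eq_self_of_list_prod_apply_eq_self (hl : ∀ T ∈ l, IsParacontracting T) {x : E}
    (h : l.prod x = x) : ∀ T ∈ l, T x = x := by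
  induction l with
  | nil => simp
  | cons T l ih =>
    have hl' : ∀ S ∈ l, IsParacontracting S := fun S hS => hl S (List.mem_cons_of_mem _ hS)
    rw [List.prod_cons, mul_apply_eq_comp] at h
    have hfix : l.prod x = x :=
      (hl T List.mem_cons_self).apply_eq_self_of_comp_apply_eq_self (list_prod hl') h
    rw [hfix] at h
    exact List.forall_mem_cons.2 ⟨h, ih hl' hfix⟩

end IsParacontracting

section FiniteDimensional

variable {E : Type*} [NormedAddCommGroup E] [NormedSpace ℝ E] [FiniteDimensional ℝ E]

theorem ContinuousLinearMap.norm_lt_one_of_norm_apply_lt (T : E →L[ℝ] E)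
    (hT : ∀ x ≠ 0, ‖T x‖ < ‖x‖) : ‖T‖ < 1 := by
  rcases subsingleton_or_nontrivial E with hE | hE
  · simp [Subsingleton.elim T 0]
  obtain ⟨y, hy, hmax⟩ := (isCompact_sphere (0 : E) 1).exists_isMaxOn
    (NormedSpace.sphere_nonempty.2 zero_le_one) T.continuous.norm.continuousOn
  rw [mem_sphere_zero_iff_norm] at hy
  calc ‖T‖ ≤ ‖T y‖ :=
        T.opNorm_le_of_unit_norm (norm_nonneg _) fun x hx => hmax (mem_sphere_zero_iff_norm.2 hx)
    _ < 1 := hy ▸ hT y (norm_ne_zero_iff.1 (hy ▸ one_ne_zero))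

theorem tendsto_pow_list_prod_apply_zero {l : List (E →L[ℝ] E)}
    (hl : ∀ T ∈ l, IsParacontracting T) (hfix : ∀ x, (∀ T ∈ l, T x = x) → x = 0) (x : E) :
    Tendsto (fun k => (l.prod ^ k) x) atTop (nhds 0) := by
  have hP : ‖l.prod‖ < 1 := l.prod.norm_lt_one_of_norm_apply_lt fun y hy =>
    IsParacontracting.list_prod hl y fun h =>
      hy (hfix y (IsParacontracting.apply_eq_self_of_list_prod_apply_eq_self hl h))
  have h := ((ContinuousLinearMap.apply ℝ E x).continuous.tendsto 0).comp
    (tendsto_pow_atTop_nhds_zero_of_norm_lt_one hP)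
  rwa [map_zero] at h

end FiniteDimensional

theorem ContinuousLinearMap.exp_apply_of_apply_eq_smul {E : Type*} [NormedAddCommGroup E]
    [NormedSpace ℝ E] [CompleteSpace E] {T : E →L[ℝ] E} {v : E} {μ : ℝ} (h : T v = μ • v) :
    exp T v = Real.exp μ • v := by
  have hpow (k : ℕ) : (T ^ k) v = μ ^ k • v := by
    induction k with
    | zero => simp
    | succ k ih => rw [pow_succ', mul_apply_eq_comp, ih, map_smul, h, smul_smul, ← pow_succ]
  refine ((NormedSpace.exp_series_hasSum_exp' (𝕂 := ℝ) T).mapL (apply ℝ E v)).unique ?_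
  rw [Real.exp_eq_exp_ℝ]
  simpa [hpow, smul_smul] using (NormedSpace.exp_series_hasSum_exp' (𝕂 := ℝ) μ).smul_const v

theorem Real.exp_neg_mul_eq_self_iff {a c : ℝ} : Real.exp (-a) * c = c ↔ a * c = 0 := by
  rw [← sub_eq_zero, ← sub_one_mul, mul_eq_zero, mul_eq_zero, sub_eq_zero, Real.exp_eq_one_iff,
    neg_eq_zero]

theorem Real.sq_exp_neg_mul_lt {a c : ℝ} (ha : 0 ≤ a) (h : Real.exp (-a) * c ≠ c) :
    (Real.exp (-a) * c) ^ 2 < c ^ 2 := by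
  have hc : c ≠ 0 := by rintro rfl; simp at h
  have hexp : Real.exp (-a) < 1 :=
    (Real.exp_le_one_iff.2 (neg_nonpos.2 ha)).lt_of_ne fun he => h (by rw [he, one_mul])
  rw [mul_pow]
  exact mul_lt_of_lt_one_left (pow_pos (abs_pos.2 hc) 2 |>.trans_eq (sq_abs c))
    (pow_lt_one₀ (Real.exp_pos _).le hexp two_ne_zero)

theorem Real.sq_exp_neg_mul_le {a c : ℝ} (ha : 0 ≤ a) : (Real.exp (-a) * c) ^ 2 ≤ c ^ 2 := by
  by_cases h : Real.exp (-a) * c = c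
  · rw [h]
  · exact (sq_exp_neg_mul_lt ha h).le

namespace ContinuousLinearMap.IsPositive

variable {E : Type*} [NormedAddCommGroup E] [InnerProductSpace ℝ E] [FiniteDimensional ℝ E]
  {S : E →L[ℝ] E}

theorem repr_exp_neg_apply (hS : S.IsPositive) (v : E) (i : Fin (Module.finrank ℝ E)) :
    (hS.toLinearMap.isSymmetric.eigenvectorBasis rfl).repr (exp (-S) v) i =
      Real.exp (-hS.toLinearMap.isSymmetric.eigenvalues rfl i) *
        (hS.toLinearMap.isSymmetric.eigenvectorBasis rfl).repr v i := by
  set b := hS.toLinearMap.isSymmetric.eigenvectorBasis rfl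
  have hb : exp (-S) (b i) = Real.exp (-hS.toLinearMap.isSymmetric.eigenvalues rfl i) • b i := by
    refine exp_apply_of_apply_eq_smul ?_
    rw [_root_.neg_apply, neg_smul]
    exact congrArg Neg.neg (hS.toLinearMap.isSymmetric.apply_eigenvectorBasis rfl i)
  have hsa : IsSelfAdjoint (exp (-S)) := hS.isSelfAdjoint.neg.exp
  rw [b.repr_apply_apply, b.repr_apply_apply, ← hsa.adjoint_eq, adjoint_inner_right, hb,
    real_inner_smul_left]

theorem isParacontracting_exp_neg (hS : S.IsPositive) : IsParacontracting ⇑(exp (-S)) := by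
  have hrepr := hS.repr_exp_neg_apply
  have hnonneg := hS.toLinearMap.nonneg_eigenvalues rfl
  set b := hS.toLinearMap.isSymmetric.eigenvectorBasis rfl
  set eig := hS.toLinearMap.isSymmetric.eigenvalues rfl
  intro x hx
  obtain ⟨i, hi⟩ : ∃ i, Real.exp (-eig i) * b.repr x i ≠ b.repr x i := by
    by_contra! h
    exact hx (b.repr.injective (PiLp.ext fun i => (hrepr x i).trans (h i)))
  have hsq : ‖exp (-S) x‖ ^ 2 < ‖x‖ ^ 2 := by
    rw [← b.repr.norm_map, ← b.repr.norm_map x, EuclideanSpace.real_norm_sq_eq,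
      EuclideanSpace.real_norm_sq_eq]
    simp_rw [hrepr]
    exact Finset.sum_lt_sum (fun j _ => Real.sq_exp_neg_mul_le (hnonneg j))
      ⟨i, Finset.mem_univ _, Real.sq_exp_neg_mul_lt (hnonneg i) hi⟩
  exact lt_of_pow_lt_pow_left₀ 2 (norm_nonneg x) hsq

theorem exp_neg_apply_eq_self_iff (hS : S.IsPositive) {x : E} : exp (-S) x = x ↔ S x = 0 := by
  have hrepr := hS.repr_exp_neg_apply x
  have hrepr_S := hS.toLinearMap.isSymmetric.eigenvectorBasis_apply_self_apply rfl x
  simp only [ContinuousLinearMap.coe_coe, RCLike.ofReal_real_eq_id, id] at hrepr_S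
  set b := hS.toLinearMap.isSymmetric.eigenvectorBasis rfl
  calc exp (-S) x = x ↔ ∀ i, b.repr (exp (-S) x) i = b.repr x i := by
        rw [← b.repr.injective.eq_iff, PiLp.ext_iff]
    _ ↔ ∀ i, b.repr (S x) i = b.repr 0 i := by
        simp_rw [hrepr, Real.exp_neg_mul_eq_self_iff, hrepr_S, map_zero, PiLp.zero_apply]
    _ ↔ S x = 0 := by rw [← PiLp.ext_iff, b.repr.injective.eq_iff]

end ContinuousLinearMap.IsPositive

theorem Matrix.toEuclideanCLM_exp {𝕜 ι : Type*} [RCLike 𝕜] [Fintype ι] [DecidableEq ι]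
    (A : Matrix ι ι 𝕜) :
    toEuclideanCLM (𝕜 := 𝕜) (exp A) = exp (toEuclideanCLM (𝕜 := 𝕜) A) := by
  let e := (toEuclideanCLM (𝕜 := 𝕜) (n := ι)).toAlgEquiv.toLinearEquiv.toContinuousLinearEquiv
  rw [NormedSpace.exp_eq_tsum 𝕜, NormedSpace.exp_eq_tsum 𝕜]
  exact e.map_tsum.trans (by simp [e, map_pow])

/-- Periodically cycling through symmetric negative semidefinite generators with
trivially intersecting kernels, with arbitrary fixed positive dwell times, drives
every initial condition to the origin. -/
theorem symmetric_generators_cyclic_stabilization {n m : ℕ}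
    (A : Fin m → Matrix (Fin n) (Fin n) ℝ)
    (hA : ∀ j, (-(A j)).PosSemidef)
    (hker : ∀ x : Fin n → ℝ, (∀ j, A j *ᵥ x = 0) → x = 0)
    (τ : Fin m → ℝ) (hτ : ∀ j, 0 < τ j) :
    ∀ x : Fin n → ℝ,
      Tendsto (fun k : ℕ =>
          ((((List.ofFn fun j : Fin m =>
            NormedSpace.exp (τ j • A j)).reverse).prod) ^ k) *ᵥ x)
        atTop (nhds 0) := by
  intro x
  let S j := toEuclideanCLM (𝕜 := ℝ) (-(τ j • A j))
  have hS j : (S j).IsPositive :=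
    Matrix.isPositive_toEuclideanLin_iff.2 (by simpa using (hA j).smul (hτ j).le)
  have hprod : toEuclideanCLM (𝕜 := ℝ) (List.ofFn fun j => exp (τ j • A j)).reverse.prod =
      (List.ofFn fun j => exp (-S j)).reverse.prod := by
    simp [S, map_list_prod, List.map_reverse, List.map_ofFn, Function.comp_def,
      Matrix.toEuclideanCLM_exp]
  have hfix (y : EuclideanSpace ℝ (Fin n))
      (hy : ∀ T ∈ (List.ofFn fun j => exp (-S j)).reverse, T y = y) : y = 0 := by
    have hAy j : A j *ᵥ WithLp.ofLp y = 0 := by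
      have := (hS j).exp_neg_apply_eq_self_iff.1 (hy _ (by simp))
      simpa [S, (hτ j).ne'] using congrArg WithLp.ofLp this
    simpa using hker _ hAy
  have hlim := tendsto_pow_list_prod_apply_zero
    (by simpa using fun j => (hS j).isParacontracting_exp_neg) hfix (WithLp.toLp 2 x)
  simp_rw [← hprod, ← map_pow] at hlim
  exact ((PiLp.continuous_ofLp 2 _).tendsto 0).comp hlim
end

section
/- Let A and Q be real n×n matrices with Q symmetric, let r ∈ (0,1], θ ≥ 1, and let a < b be real numbers. Define x(t) = exp((t−a)A) x_a for t ∈ [a,b], set x_b = x(b), and let η = ‖Aᵀ(Q+I) + (Q+I)A‖ (operator norm induced by the Euclidean norm). Suppose x_aᵀ (Q+I) x_a ≤ 0, x_bᵀ (Q+I) x_b ≥ (1−r) · x_bᵀ x_b, x_b ≠ 0, and ‖x(t)‖ ≤ θ ‖x_b‖ for all t ∈ [a,b]. Then (b−a) · θ² · η ≥ 1 − r. -/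
open Matrix
open scoped Matrix.Norms.L2Operator

/-!
Along a solution of `ẋ = A x`, the form `g = xᵀ C x` has derivative `xᵀ (AᵀC + CA) x`, which is at
most `‖AᵀC + CA‖ ‖x‖²` for the Euclidean operator norm. With `C = Q + 1` and `‖x(t)‖ ≤ θ ‖x_b‖`, the
mean value theorem gives `(1 - r) ‖x_b‖² ≤ g(b) - g(a) ≤ (b - a) θ² η ‖x_b‖²`, and `x_b ≠ 0` lets
us cancel `‖x_b‖²`.
-/

variable {m : Type*} [Fintype m]

theorem dotProduct_mulVec_add_dotProduct_mulVec {R : Type*} [CommSemiring R] (A C : Matrix m m R)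
    (x : m → R) :
    (A *ᵥ x) ⬝ᵥ (C *ᵥ x) + x ⬝ᵥ (C *ᵥ (A *ᵥ x)) = x ⬝ᵥ ((Aᵀ * C + C * A) *ᵥ x) := by
  rw [add_mulVec, dotProduct_add, ← mulVec_mulVec, ← mulVec_mulVec, dotProduct_mulVec x Aᵀ,
    vecMul_transpose]

theorem HasDerivAt.dotProduct {f g : ℝ → m → ℝ} {f' g' : m → ℝ} {t : ℝ}
    (hf : HasDerivAt f f' t) (hg : HasDerivAt g g' t) :
    HasDerivAt (fun s => f s ⬝ᵥ g s) (f' ⬝ᵥ g t + f t ⬝ᵥ g') t :=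
  (HasDerivAt.fun_sum (u := Finset.univ) fun i _ =>
    (hasDerivAt_pi.1 hf i).fun_mul (hasDerivAt_pi.1 hg i)).congr_deriv Finset.sum_add_distrib

theorem HasDerivAt.const_mulVec {n : Type*} [Fintype n] (C : Matrix m n ℝ) {f : ℝ → n → ℝ}
    {f' : n → ℝ} {t : ℝ} (hf : HasDerivAt f f' t) : HasDerivAt (fun s => C *ᵥ f s) (C *ᵥ f') t :=
  (C.mulVecLin.toContinuousLinearMap).hasFDerivAt.comp_hasDerivAt t hf

theorem HasDerivAt.mulVec_const {n : Type*} [Fintype n] [DecidableEq n] {M : ℝ → Matrix m n ℝ}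
    {M' : Matrix m n ℝ} {t : ℝ} (hM : HasDerivAt M M' t) (v : n → ℝ) :
    HasDerivAt (fun s => M s *ᵥ v) (M' *ᵥ v) t :=
  let L : Matrix m n ℝ →L[ℝ] m → ℝ := ((mulVecBilin ℝ ℝ).flip v).toContinuousLinearMap
  L.hasFDerivAt.comp_hasDerivAt t hM

theorem hasDerivAt_dotProduct_mulVec_of_hasDerivAt_mulVec {x : ℝ → m → ℝ} {A : Matrix m m ℝ}
    (C : Matrix m m ℝ) {t : ℝ} (hx : HasDerivAt x (A *ᵥ x t) t) :
    HasDerivAt (fun s => x s ⬝ᵥ (C *ᵥ x s)) (x t ⬝ᵥ ((Aᵀ * C + C * A) *ᵥ x t)) t := by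
  rw [← dotProduct_mulVec_add_dotProduct_mulVec]
  exact hx.dotProduct (hx.const_mulVec C)

variable [DecidableEq m]

theorem hasDerivAt_exp_smul_sub_mulVec (A : Matrix m m ℝ) (v : m → ℝ) (a t : ℝ) :
    HasDerivAt (fun s => NormedSpace.exp ((s - a) • A) *ᵥ v)
      (A *ᵥ (NormedSpace.exp ((t - a) • A) *ᵥ v)) t := by
  have : CompleteSpace (Matrix m m ℝ) := FiniteDimensional.complete ℝ _
  have hexp := (hasDerivAt_exp_smul_const' (𝕂 := ℝ) A (t - a)).comp_sub_const t a
  rw [mulVec_mulVec]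
  exact hexp.mulVec_const v

theorem dotProduct_mulVec_le_l2_opNorm_mul_sq (M : Matrix m m ℝ) (x : m → ℝ) :
    x ⬝ᵥ (M *ᵥ x) ≤ ‖M‖ * ‖WithLp.toLp 2 x‖ ^ 2 := by
  calc x ⬝ᵥ (M *ᵥ x) = inner ℝ (WithLp.toLp 2 x) (WithLp.toLp 2 (M *ᵥ x)) := by
        simp [EuclideanSpace.inner_toLp_toLp, dotProduct_comm]
    _ ≤ ‖WithLp.toLp 2 x‖ * ‖WithLp.toLp 2 (M *ᵥ x)‖ := real_inner_le_norm _ _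
    _ ≤ ‖WithLp.toLp 2 x‖ * (‖M‖ * ‖WithLp.toLp 2 x‖) := by
        gcongr; exact M.l2_opNorm_mulVec _
    _ = ‖M‖ * ‖WithLp.toLp 2 x‖ ^ 2 := by ring

theorem dotProduct_mulVec_sub_le_of_hasDerivAt_mulVec {x : ℝ → m → ℝ} (A C : Matrix m m ℝ)
    (hx : ∀ t, HasDerivAt x (A *ᵥ x t) t) {a b R : ℝ} (hab : a ≤ b)
    (hR : ∀ t ∈ Set.Icc a b, ‖WithLp.toLp 2 (x t)‖ ≤ R) :
    x b ⬝ᵥ (C *ᵥ x b) - x a ⬝ᵥ (C *ᵥ x a) ≤ ‖Aᵀ * C + C * A‖ * R ^ 2 * (b - a) := by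
  have hg := fun t => hasDerivAt_dotProduct_mulVec_of_hasDerivAt_mulVec C (hx t)
  refine (convex_Icc a b).image_sub_le_mul_sub_of_deriv_le
    (fun t _ => (hg t).continuousAt.continuousWithinAt)
    (fun t _ => (hg t).differentiableAt.differentiableWithinAt) (fun t ht => ?_)
    a (Set.left_mem_Icc.2 hab) b (Set.right_mem_Icc.2 hab) hab
  have hxt := hR t (interior_subset ht)
  rw [(hg t).deriv]
  calc _ ≤ ‖Aᵀ * C + C * A‖ * ‖WithLp.toLp 2 (x t)‖ ^ 2 :=
        dotProduct_mulVec_le_l2_opNorm_mul_sq _ _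
    _ ≤ ‖Aᵀ * C + C * A‖ * R ^ 2 := by gcongr

theorem quadratic_form_dwell_time_bound_general {n : ℕ}
    (A Q : Matrix (Fin n) (Fin n) ℝ)
    (r : ℝ) (θ : ℝ)
    (a b : ℝ) (hab : a < b) (xa : Fin n → ℝ)
    (x : ℝ → Fin n → ℝ)
    (hx : ∀ t ∈ Set.Icc a b, x t = NormedSpace.exp ((t - a) • A) *ᵥ xa)
    (hga : x a ⬝ᵥ ((Q + 1) *ᵥ x a) ≤ 0)
    (hgb : x b ⬝ᵥ ((Q + 1) *ᵥ x b) ≥ (1 - r) * (x b ⬝ᵥ x b))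
    (hxb : x b ≠ 0)
    (hbound : ∀ t ∈ Set.Icc a b,
      ‖(WithLp.equiv 2 (Fin n → ℝ)).symm (x t)‖ ≤
        θ * ‖(WithLp.equiv 2 (Fin n → ℝ)).symm (x b)‖) :
    (b - a) * θ ^ 2 * ‖Aᵀ * (Q + 1) + (Q + 1) * A‖ ≥ 1 - r := by
  have hgrowth := dotProduct_mulVec_sub_le_of_hasDerivAt_mulVec A (Q + 1)
    (fun t => hasDerivAt_exp_smul_sub_mulVec A xa a t) hab.le
    (fun t ht => hx t ht ▸ hbound t ht)
  rw [← hx a (Set.left_mem_Icc.2 hab.le), ← hx b (Set.right_mem_Icc.2 hab.le)] at hgrowth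
  set N := ‖(WithLp.equiv 2 (Fin n → ℝ)).symm (x b)‖
  have hnorm_sq : x b ⬝ᵥ x b = N ^ 2 := by
    rw [← real_inner_self_eq_norm_sq, EuclideanSpace.inner_toLp_toLp, star_trivial]; rfl
  have hpos : 0 < N ^ 2 := by
    simpa [N, sq_pos_iff] using hxb
  rw [hnorm_sq] at hgb
  refine le_of_mul_le_mul_right ?_ hpos
  calc (1 - r) * N ^ 2 ≤ _ - _ := by linarith
    _ ≤ _ := hgrowth
    _ = _ := by ring

/-- Dwell-time estimate (first case of Theorem 2): along a solution of `ẋ = Ax`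
whose Euclidean norm stays within a factor `θ` of its final value, the interval
needed for `g(t) = x(t)ᵀ(Q+I)x(t)` to rise from `≤ 0` to `≥ (1-r)‖x_b‖²` has
length at least `(1-r)/(θ²η)`, where `η = ‖Aᵀ(Q+I) + (Q+I)A‖`. -/
theorem quadratic_form_dwell_time_bound {n : ℕ}
    (A Q : Matrix (Fin n) (Fin n) ℝ) (hQ : Qᵀ = Q)
    (r : ℝ) (hr : r ∈ Set.Ioc (0 : ℝ) 1) (θ : ℝ) (hθ : 1 ≤ θ)
    (a b : ℝ) (hab : a < b) (xa : Fin n → ℝ)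
    (x : ℝ → Fin n → ℝ)
    (hx : ∀ t ∈ Set.Icc a b, x t = NormedSpace.exp ((t - a) • A) *ᵥ xa)
    (hga : x a ⬝ᵥ ((Q + 1) *ᵥ x a) ≤ 0)
    (hgb : x b ⬝ᵥ ((Q + 1) *ᵥ x b) ≥ (1 - r) * (x b ⬝ᵥ x b))
    (hxb : x b ≠ 0)
    (hbound : ∀ t ∈ Set.Icc a b,
      ‖(WithLp.equiv 2 (Fin n → ℝ)).symm (x t)‖ ≤
        θ * ‖(WithLp.equiv 2 (Fin n → ℝ)).symm (x b)‖) :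
    (b - a) * θ ^ 2 * ‖Aᵀ * (Q + 1) + (Q + 1) * A‖ ≥ 1 - r :=
  quadratic_form_dwell_time_bound_general A Q r θ a b hab xa x hx hga hgb hxb hbound
end

section
/- Let (E_t)_{t ≥ 0} be a family of linear maps on the n×n complex matrices, each positive (mapping positive semidefinite matrices to positive semidefinite matrices) and trace-preserving. Let ρ̂_0, ρ̄ and ρ_0 be density matrices (Hermitian, positive semidefinite, trace one) such that E_t(ρ̂_0) → ρ̄ as t → ∞ and the range of ρ_0 is contained in the range of ρ̂_0. Let Π̄ be the orthogonal projection matrix onto the range of ρ̄ (Π̄ = Π̄† = Π̄²). Then Tr(Π̄ · E_t(ρ_0)) → 1 as t → ∞. -/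
/-!
Let `Q = 1 - Pr`. Since the range of `ρ` lies in that of `ρ̂`, `ρ ≤ c ρ̂` for some constant `c`.
Positivity of `E t` and of `X ↦ Tr(Q X)` then squeezes `0 ≤ Tr(Q E_t ρ) ≤ c Tr(Q E_t ρ̂)`, and the
right-hand side tends to `c Tr(Q ρ̄) = 0`. Trace preservation turns this into
`Tr(Pr E_t ρ) = 1 - Tr(Q E_t ρ) → 1`.
-/

open Filter Matrix
open scoped ComplexOrder MatrixOrder

namespace Matrix

lemma mul_eq_self_of_range_le {R n : Type*} [CommSemiring R] [Fintype n] [DecidableEq n]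
    {M A B : Matrix n n R} (hMB : M * B = B)
    (hAB : LinearMap.range A.toLin' ≤ LinearMap.range B.toLin') : M * A = A := by
  refine toLin'.injective (LinearMap.ext fun x => ?_)
  obtain ⟨y, hy⟩ := hAB (LinearMap.mem_range_self _ x)
  rw [toLin'_mul, LinearMap.comp_apply, ← hy, ← LinearMap.comp_apply, ← toLin'_mul, hMB]

variable {n 𝕜 : Type*} [Fintype n] [DecidableEq n] [RCLike 𝕜]

lemma IsHermitian.exists_le_smul_of_range_le {A B : Matrix n n 𝕜} (hA : A.IsHermitian)
    (hB : B.PosSemidef) (hAB : LinearMap.range A.toLin' ≤ LinearMap.range B.toLin') :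
    ∃ c : ℝ, A ≤ c • B := by
  have hcont (f : ℝ → ℝ) : ContinuousOn f (spectrum ℝ B) := B.finite_real_spectrum.continuousOn f
  -- `P` is the orthogonal projection onto the range of `B`; then `A = P A P ≤ K P ≤ K c B`,
  -- where `K` bounds the spectrum of `A` and `1 / c` the nonzero spectrum of `B`.
  set χ : ℝ → ℝ := fun x => if x = 0 then 0 else 1
  set P := cfc χ B
  have hP : IsSelfAdjoint P := cfc_predicate χ B
  have hPB : P * B = B := calc
    P * B = cfc (fun x => χ x * x) B := by rw [cfc_mul χ (fun x => x) B (hcont χ), cfc_id' ℝ B]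
    _ = cfc (fun x => x) B := cfc_congr fun x _ => by by_cases hx : x = 0 <;> simp [χ, hx]
    _ = B := cfc_id' ℝ B
  have hPAP : star P * A * P = A := by
    have hPA := mul_eq_self_of_range_le hPB hAB
    have hAP : A * P = A := by
      simpa only [star_mul, hP.star_eq, hA.isSelfAdjoint.star_eq] using congrArg star hPA
    rw [hP.star_eq, hPA, hAP]
  obtain ⟨K, hK⟩ := (A.finite_real_spectrum.insert 0).bddAbove
  obtain ⟨c, hc⟩ := (B.finite_real_spectrum.image (·⁻¹)).bddAbove
  refine ⟨K * c, ?_⟩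
  calc A = star P * A * P := hPAP.symm
    _ ≤ star P * algebraMap ℝ _ K * P :=
        star_left_conjugate_le_conjugate
          (le_algebraMap_of_spectrum_le (fun x hx => hK (Set.mem_insert_of_mem 0 hx))
            hA.isSelfAdjoint) P
    _ = cfc (fun x => χ x * K * χ x) B := by
        rw [cfc_mul _ χ B (hcont _) (hcont χ), cfc_mul χ _ B (hcont χ) (hcont _),
          cfc_const K B hB.isHermitian.isSelfAdjoint, hP.star_eq]
    _ ≤ cfc (fun x => K * c * x) B := cfc_mono (fun x hx => ?_) (hcont _) (hcont _)
    _ = (K * c) • B := cfc_const_mul_id _ B hB.isHermitian.isSelfAdjoint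
  have hK0 : 0 ≤ K := hK (Set.mem_insert 0 _)
  have hx0 : 0 ≤ x := spectrum_nonneg_of_nonneg hB.nonneg hx
  by_cases hx_eq : x = 0
  · simp [χ, hx_eq]
  · have hcx : 1 ≤ c * x := calc
      1 = x⁻¹ * x := (inv_mul_cancel₀ hx_eq).symm
      _ ≤ c * x := mul_le_mul_of_nonneg_right (hc ⟨x, hx, rfl⟩) hx0
    simpa [χ, hx_eq, mul_assoc] using le_mul_of_one_le_right hK0 hcx

lemma trace_mul_nonneg {A B : Matrix n n 𝕜} (hA : 0 ≤ A) (hB : 0 ≤ B) : 0 ≤ (A * B).trace := by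
  rw [← CFC.sqrt_mul_sqrt_self A hA, Matrix.mul_assoc, trace_mul_comm]
  exact (nonneg_iff_posSemidef.mp (conjugate_nonneg_of_nonneg hB (CFC.sqrt_nonneg A))).trace_nonneg

end Matrix

lemma CStarAlgebra.tendsto_zero_of_nonneg_of_le {α A : Type*} [NonUnitalCStarAlgebra A]
    [PartialOrder A] [StarOrderedRing A] {l : Filter α} {f g : α → A}
    (hf : ∀ᶠ x in l, 0 ≤ f x) (hfg : ∀ᶠ x in l, f x ≤ g x) (hg : Tendsto g l (nhds 0)) :
    Tendsto f l (nhds 0) :=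
  squeeze_zero_norm'
    (by filter_upwards [hf, hfg] with x h0 h1 using norm_le_norm_of_nonneg_of_le h0 h1)
    (tendsto_zero_iff_norm_tendsto_zero.mp hg)

theorem robustness_of_support_population_general {n : ℕ}
    (E : ℝ → (Matrix (Fin n) (Fin n) ℂ →ₗ[ℂ] Matrix (Fin n) (Fin n) ℂ))
    (hpos : ∀ t : ℝ, 0 ≤ t → ∀ X : Matrix (Fin n) (Fin n) ℂ,
      X.PosSemidef → (E t X).PosSemidef)
    (htp : ∀ t : ℝ, 0 ≤ t → ∀ X : Matrix (Fin n) (Fin n) ℂ,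
      (E t X).trace = X.trace)
    (ρhat ρbar ρ : Matrix (Fin n) (Fin n) ℂ)
    (hρhat : ρhat.PosSemidef ∧ ρhat.trace = 1)
    (hρ : ρ.PosSemidef ∧ ρ.trace = 1)
    (hlim : Tendsto (fun t => E t ρhat) atTop (nhds ρbar))
    (hsupp : LinearMap.range (Matrix.toLin' ρ) ≤ LinearMap.range (Matrix.toLin' ρhat))
    (Pr : Matrix (Fin n) (Fin n) ℂ)
    (hPr : Prᴴ = Pr ∧ Pr * Pr = Pr ∧
      LinearMap.range (Matrix.toLin' Pr) = LinearMap.range (Matrix.toLin' ρbar)) :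
    Tendsto (fun t => (Pr * E t ρ).trace) atTop (nhds 1) := by
  obtain ⟨c, hc⟩ := hρ.1.isHermitian.exists_le_smul_of_range_le hρhat.1 hsupp
  set Q := 1 - Pr
  have hQ : 0 ≤ Q := (isStarProjection_iff'.mpr ⟨hPr.2.1, hPr.1⟩).one_sub.nonneg
  have hQρbar : Q * ρbar = 0 := by
    rw [sub_mul, one_mul, mul_eq_self_of_range_le hPr.2.1 hPr.2.2.ge, sub_self]
  have hQE : ∀ᶠ t in atTop, ∀ X, X.PosSemidef → 0 ≤ (Q * E t X).trace :=
    (eventually_ge_atTop 0).mono fun t ht X hX => trace_mul_nonneg hQ (hpos t ht X hX).nonneg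
  have hρhat_lim : Tendsto (fun t => (c : ℂ) * (Q * E t ρhat).trace) atTop (nhds 0) := by
    simpa [hQρbar] using
      (((continuous_const_mul Q).matrix_trace.tendsto ρbar).comp hlim).const_mul (c : ℂ)
  have hρ_lim : Tendsto (fun t => (Q * E t ρ).trace) atTop (nhds 0) := by
    refine CStarAlgebra.tendsto_zero_of_nonneg_of_le (hQE.mono fun t h => h ρ hρ.1)
      (hQE.mono fun t h => ?_) hρhat_lim
    have := h _ (le_iff.mp hc)
    rwa [map_sub, LinearMap.map_smul_of_tower, Matrix.mul_sub, trace_sub, mul_smul_comm,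
      trace_smul, Complex.real_smul, sub_nonneg] at this
  have hPr_trace : ∀ᶠ t in atTop, 1 - (Q * E t ρ).trace = (Pr * E t ρ).trace :=
    (eventually_ge_atTop 0).mono fun t ht => by
      rw [sub_mul, one_mul, trace_sub, htp t ht, hρ.2, sub_sub_cancel]
  simpa using (tendsto_const_nhds.sub hρ_lim).congr' hPr_trace

/-- Robustness proposition: if a family of trace-preserving positive linear maps
drives an estimated initial state `ρ̂₀` to a target `ρ̄`, then any actual initial
state supported inside the support of `ρ̂₀` asymptotically acquires all its
population on the support of `ρ̄` (here `Pr` is the orthogonal projection onto the range of `ρ̄`). -/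
theorem robustness_of_support_population {n : ℕ}
    (E : ℝ → (Matrix (Fin n) (Fin n) ℂ →ₗ[ℂ] Matrix (Fin n) (Fin n) ℂ))
    (hpos : ∀ t : ℝ, 0 ≤ t → ∀ X : Matrix (Fin n) (Fin n) ℂ,
      X.PosSemidef → (E t X).PosSemidef)
    (htp : ∀ t : ℝ, 0 ≤ t → ∀ X : Matrix (Fin n) (Fin n) ℂ,
      (E t X).trace = X.trace)
    (ρhat ρbar ρ : Matrix (Fin n) (Fin n) ℂ)
    (hρhat : ρhat.PosSemidef ∧ ρhat.trace = 1)
    (hρbar : ρbar.PosSemidef ∧ ρbar.trace = 1)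
    (hρ : ρ.PosSemidef ∧ ρ.trace = 1)
    (hlim : Tendsto (fun t => E t ρhat) atTop (nhds ρbar))
    (hsupp : LinearMap.range (Matrix.toLin' ρ) ≤ LinearMap.range (Matrix.toLin' ρhat))
    (Pr : Matrix (Fin n) (Fin n) ℂ)
    (hPr : Prᴴ = Pr ∧ Pr * Pr = Pr ∧
      LinearMap.range (Matrix.toLin' Pr) = LinearMap.range (Matrix.toLin' ρbar)) :
    Tendsto (fun t => (Pr * E t ρ).trace) atTop (nhds 1) :=
  robustness_of_support_population_general E hpos htp ρhat ρbar ρ hρhat hρ hlim hsupp Pr hPr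
end
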